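/- arXiv:2312.05974 — 2 statements merged into one kernel-verified Lean document; each statement's English description precedes it below -/
import Mathlib

section
/- Let A = ρĀ with Ā symmetric stochastic, 0 < ρ < 1. Define E = (I − A²) A Σ_{i=0}^∞ A^i Σ̄ A^i, where all entries of Σ̄ lie in [s_min, s_max]. Then the oscillation of the entries of E satisfies Osc(E) ≤ (ρ(1+ρ²)/(1−ρ²)) (s_max − s_min), where Osc of a matrix is the difference between its maximum and minimum entries. -/
/-!
Write `A = ρ • Ā`. A symmetric stochastic `Ā` is doubly stochastic, and so are its powers; every
entry of `Āᵏ X` or `X Āᵏ` is a convex combination of entries of `X`, so it stays in any interval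
containing them. Hence `Aᵏ Σ̄ Aᵏ = ρ^{2k} Āᵏ Σ̄ Āᵏ` has entries in `ρ^{2k} [s_min, s_max]`, and
`S = ∑ₖ Aᵏ Σ̄ Aᵏ` has entries in `[m, M] = [s_min, s_max] / (1 - ρ²)`. Finally
`E = ρ Ā S - ρ³ Ā³ S` with `Ā S` and `Ā³ S` both having entries in `[m, M]`, so
`Osc E ≤ (ρ + ρ³) (M - m)`.
-/

open Matrix

/-- Oscillation of a matrix: maximum entry minus minimum entry. -/
noncomputable def oscM {N : ℕ} [NeZero N] (M : Matrix (Fin N) (Fin N) ℝ) : ℝ :=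
  (⨆ p : Fin N × Fin N, M p.1 p.2) - ⨅ p : Fin N × Fin N, M p.1 p.2

open Set

theorem summable_geometric_mul_of_mem_Icc {r a b : ℝ} (hr0 : 0 ≤ r) (hr1 : r < 1) {g : ℕ → ℝ}
    (hg : ∀ k, g k ∈ Icc a b) : Summable fun k => r ^ k * g k := by
  refine ((summable_geometric_of_lt_one hr0 hr1).mul_right (max |a| |b|)).of_norm_bounded
    fun k => ?_
  rw [norm_mul, norm_pow, Real.norm_of_nonneg hr0]
  exact mul_le_mul_of_nonneg_left (abs_le_max_abs_abs (hg k).1 (hg k).2) (by positivity)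

theorem tsum_geometric_mul_mem_Icc {r a b : ℝ} (hr0 : 0 ≤ r) (hr1 : r < 1) {g : ℕ → ℝ}
    (hg : ∀ k, g k ∈ Icc a b) : ∑' k, r ^ k * g k ∈ Icc (a / (1 - r)) (b / (1 - r)) := by
  have hgeom := summable_geometric_of_lt_one hr0 hr1
  have hsum : ∀ c, ∑' k, r ^ k * c = c / (1 - r) := fun c => by
    rw [tsum_mul_right, tsum_geometric_of_lt_one hr0 hr1, inv_mul_eq_div]
  have hg' := summable_geometric_mul_of_mem_Icc hr0 hr1 hg
  constructor
  · rw [← hsum]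
    exact (hgeom.mul_right a).tsum_le_tsum
      (fun k => mul_le_mul_of_nonneg_left (hg k).1 (pow_nonneg hr0 k)) hg'
  · rw [← hsum]
    exact hg'.tsum_le_tsum
      (fun k => mul_le_mul_of_nonneg_left (hg k).2 (pow_nonneg hr0 k)) (hgeom.mul_right b)

namespace Matrix

theorem tsum_geometric_smul_apply_mem_Icc {m n : Type*} {r a b : ℝ} (hr0 : 0 ≤ r)
    (hr1 : r < 1) {T : ℕ → Matrix m n ℝ} (hT : ∀ k i j, T k i j ∈ Icc a b) (i : m) (j : n) :
    (∑' k, r ^ k • T k) i j ∈ Icc (a / (1 - r)) (b / (1 - r)) := by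
  have hs : Summable fun k => r ^ k • T k := Pi.summable.2 fun i => Pi.summable.2 fun j =>
    summable_geometric_mul_of_mem_Icc hr0 hr1 fun k => hT k i j
  rw [← (Pi.hasSum.1 (Pi.hasSum.1 hs.hasSum i) j).tsum_eq]
  exact tsum_geometric_mul_mem_Icc hr0 hr1 fun k => hT k i j

variable {n l : Type*} [Fintype n] [DecidableEq n]

theorem IsSymm.mem_colStochastic {A : Matrix n n ℝ} (hA : A.IsSymm)
    (h : A ∈ rowStochastic ℝ n) : A ∈ colStochastic ℝ n := by
  rw [← transpose_mem_rowStochastic_iff_mem_colStochastic, hA.eq]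
  exact h

theorem mul_apply_mem_Icc_of_mem_rowStochastic {B : Matrix n n ℝ} {S : Matrix n l ℝ} {a b : ℝ}
    (hB : B ∈ rowStochastic ℝ n) (hS : ∀ i j, S i j ∈ Icc a b) (i : n) (j : l) :
    (B * S) i j ∈ Icc a b :=
  (convex_Icc a b).sum_mem (fun _ _ => nonneg_of_mem_rowStochastic hB)
    (sum_row_of_mem_rowStochastic hB i) fun k _ => hS k j

theorem mul_apply_mem_Icc_of_mem_colStochastic {S : Matrix l n ℝ} {C : Matrix n n ℝ} {a b : ℝ}
    (hC : C ∈ colStochastic ℝ n) (hS : ∀ i j, S i j ∈ Icc a b) (i : l) (j : n) :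
    (S * C) i j ∈ Icc a b := by
  rw [mul_apply]
  simp_rw [mul_comm (S i _)]
  exact (convex_Icc a b).sum_mem (fun _ _ => nonneg_of_mem_colStochastic hC)
    (sum_col_of_mem_colStochastic hC j) fun k _ => hS i k

theorem smul_pow_mul_mul_smul_pow {R : Type*} [CommRing R] (c : R) (B T : Matrix n n R) (k : ℕ) :
    (c • B) ^ k * T * (c • B) ^ k = (c ^ 2) ^ k • (B ^ k * T * B ^ k) := by
  rw [smul_pow, smul_mul_assoc, smul_mul_smul, ← mul_pow, sq]

theorem one_sub_smul_sq_mul_smul {R : Type*} [CommRing R] (c : R) (B : Matrix n n R) :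
    (1 - (c • B) ^ 2) * (c • B) = c • B - c ^ 3 • B ^ 3 := by
  rw [smul_pow, sub_mul, one_mul, smul_mul_smul, ← pow_succ, ← pow_succ]

end Matrix

theorem oscM_le_of_mem_Icc {N : ℕ} [NeZero N] {M : Matrix (Fin N) (Fin N) ℝ} {a b : ℝ}
    (h : ∀ i j, M i j ∈ Icc a b) : oscM M ≤ b - a :=
  sub_le_sub (ciSup_le fun p => (h p.1 p.2).2) (le_ciInf fun p => (h p.1 p.2).1)

theorem oscM_error_bound {N : ℕ} [NeZero N]
    (Abar : Matrix (Fin N) (Fin N) ℝ)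
    (hnonneg : ∀ i j, 0 ≤ Abar i j)
    (hsymm : Abar.IsSymm)
    (hstoch : ∀ i, ∑ j, Abar i j = 1)
    (ρ : ℝ) (hρ0 : 0 < ρ) (hρ1 : ρ < 1)
    (A : Matrix (Fin N) (Fin N) ℝ) (hA : A = ρ • Abar)
    (Sbar : Matrix (Fin N) (Fin N) ℝ) (smin smax : ℝ)
    (hS : ∀ i j, smin ≤ Sbar i j ∧ Sbar i j ≤ smax)
    (E : Matrix (Fin N) (Fin N) ℝ)
    (hE : E = (1 - A ^ 2) * A * ∑' k : ℕ, A ^ k * Sbar * A ^ k) :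
    oscM E ≤ ρ * (1 + ρ ^ 2) / (1 - ρ ^ 2) * (smax - smin) := by
  have hrow : Abar ∈ rowStochastic ℝ (Fin N) := mem_rowStochastic_iff_sum.2 ⟨hnonneg, hstoch⟩
  have hcol := hsymm.mem_colStochastic hrow
  have hpow_entry : ∀ k i j, (Abar ^ k * Sbar * Abar ^ k) i j ∈ Icc smin smax := fun k =>
    mul_apply_mem_Icc_of_mem_colStochastic (pow_mem hcol k)
      (mul_apply_mem_Icc_of_mem_rowStochastic (pow_mem hrow k) hS)
  set S := ∑' k : ℕ, (ρ ^ 2) ^ k • (Abar ^ k * Sbar * Abar ^ k)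
  have hE' : E = ρ • (Abar * S) - ρ ^ 3 • (Abar ^ 3 * S) := by
    rw [hE, hA, one_sub_smul_sq_mul_smul, sub_mul, smul_mul_assoc, smul_mul_assoc]
    simp only [smul_pow_mul_mul_smul_pow, S]
  have hr1 : ρ ^ 2 < 1 := by nlinarith
  set m := smin / (1 - ρ ^ 2)
  set M := smax / (1 - ρ ^ 2)
  have hS_entry : ∀ i j, S i j ∈ Icc m M :=
    tsum_geometric_smul_apply_mem_Icc (sq_nonneg ρ) hr1 hpow_entry
  have hE_entry : ∀ i j, E i j ∈ Icc (ρ * m - ρ ^ 3 * M) (ρ * M - ρ ^ 3 * m) := by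
    intro i j
    obtain ⟨h1m, h1M⟩ := mul_apply_mem_Icc_of_mem_rowStochastic hrow hS_entry i j
    obtain ⟨h3m, h3M⟩ := mul_apply_mem_Icc_of_mem_rowStochastic (pow_mem hrow 3) hS_entry i j
    rw [hE', Matrix.sub_apply, Matrix.smul_apply, Matrix.smul_apply, smul_eq_mul, smul_eq_mul]
    constructor <;> gcongr
  calc oscM E ≤ (ρ * M - ρ ^ 3 * m) - (ρ * m - ρ ^ 3 * M) := oscM_le_of_mem_Icc hE_entry
    _ = ρ * (1 + ρ ^ 2) / (1 - ρ ^ 2) * (smax - smin) := by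
      simp only [m, M]
      field_simp
      ring
end

section
/- Let A = ρĀ with Ā symmetric stochastic, 0 < ρ < 1, σ²_gap > 0, β ∈ ℝ. If Σ_x = σ²_gap I + β𝟏𝟏ᵀ (i.e., the off-diagonal variability Σ̄ = 0), then (1/σ²_gap)(R_1 − R_3) = A + (βρ/σ²_gap)𝟏𝟏ᵀ; in particular the error matrix (1/σ²_gap)(R_1 − R_3) − A is a constant multiple of 𝟏𝟏ᵀ (flat). -/
/-!
Since `Ā` is symmetric and stochastic, `A` acts on `J = 𝟏𝟏ᵀ` from either side as the scalar `ρ`.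
Hence each summand `Aⁱ Σ_x Aⁱ` splits as `σ²_gap (A²)ⁱ + β ρ²ⁱ J`, and multiplying the series by
`A - A³ = A (1 - A²)` telescopes the first part to `σ²_gap A` and turns the second into
`β (ρ - ρ³) / (1 - ρ²) J = β ρ J`. Convergence comes from `‖A‖ ≤ ρ < 1` in the `ℓ∞` operator norm.
-/

open Matrix

/-- The all-ones matrix `𝟏𝟏ᵀ`. -/
def onesMat (N : ℕ) : Matrix (Fin N) (Fin N) ℝ := Matrix.of fun _ _ => (1 : ℝ)

-- This norm induces the entrywise topology, so `∑'` keeps the meaning it has in the statement.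
attribute [local instance] Matrix.linftyOpNormedRing Matrix.linftyOpNormedAlgebra

section Algebra

variable {R E : Type*} [CommSemiring R] [Semiring E] [Algebra R E]

theorem pow_mul_eq_smul_of_mul_eq_smul {a j : E} {r : R} (h : a * j = r • j) (n : ℕ) :
    a ^ n * j = r ^ n • j := by
  induction n with
  | zero => simp
  | succ n ih => rw [pow_succ, mul_assoc, h, mul_smul_comm, ih, smul_smul, ← pow_succ']

theorem mul_pow_eq_smul_of_mul_eq_smul {a j : E} {r : R} (h : j * a = r • j) (n : ℕ) :
    j * a ^ n = r ^ n • j := by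
  induction n with
  | zero => simp
  | succ n ih => rw [pow_succ', ← mul_assoc, h, smul_mul_assoc, ih, smul_smul, ← pow_succ']

theorem pow_mul_smul_one_add_smul_mul_pow {a j : E} {r : R}
    (hl : a * j = r • j) (hr : j * a = r • j) (σ β : R) (i : ℕ) :
    a ^ i * (σ • 1 + β • j) * a ^ i = σ • (a ^ 2) ^ i + (β * (r ^ 2) ^ i) • j := by
  rw [mul_add, add_mul, mul_smul_comm, mul_one, smul_mul_assoc, ← pow_add, ← two_mul, pow_mul,
    mul_smul_comm, smul_mul_assoc, pow_mul_eq_smul_of_mul_eq_smul hl, smul_mul_assoc,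
    mul_pow_eq_smul_of_mul_eq_smul hr, smul_smul, smul_smul, mul_assoc, ← pow_add, ← two_mul,
    pow_mul]

end Algebra

section NormedAlgebra

variable {E : Type*} [NormedRing E]

theorem norm_sq_lt_one {a : E} (ha : ‖a‖ < 1) : ‖a ^ 2‖ < 1 :=
  (norm_pow_le' a two_pos).trans_lt (pow_lt_one₀ (norm_nonneg a) ha two_ne_zero)

variable [NormedAlgebra ℝ E] [CompleteSpace E]

theorem hasSum_pow_mul_smul_one_add_smul_mul_pow {a j : E} {r : ℝ} (ha : ‖a‖ < 1) (hr : |r| < 1)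
    (hjl : a * j = r • j) (hjr : j * a = r • j) (σ β : ℝ) :
    HasSum (fun i : ℕ => a ^ i * (σ • 1 + β • j) * a ^ i)
      (σ • ∑' i : ℕ, (a ^ 2) ^ i + (β * (1 - r ^ 2)⁻¹) • j) := by
  have hr2 : |r ^ 2| < 1 := by rw [abs_pow]; exact pow_lt_one₀ (abs_nonneg r) hr two_ne_zero
  simp_rw [pow_mul_smul_one_add_smul_mul_pow hjl hjr]
  exact ((summable_geometric_of_norm_lt_one (norm_sq_lt_one ha)).hasSum.const_smul σ).add
    (((hasSum_geometric_of_abs_lt_one hr2).mul_left β).smul_const j)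

theorem sub_pow_three_mul_tsum_pow_mul_smul_one_add_smul_mul_pow {a j : E} {r : ℝ} (ha : ‖a‖ < 1)
    (hr : |r| < 1) (hjl : a * j = r • j) (hjr : j * a = r • j) (σ β : ℝ) :
    (a - a ^ 3) * ∑' i : ℕ, a ^ i * (σ • 1 + β • j) * a ^ i = σ • a + (β * r) • j := by
  have hfactor : a - a ^ 3 = a * (1 - a ^ 2) := by noncomm_ring
  have hr2 : 1 - r ^ 2 ≠ 0 := by nlinarith [abs_lt.1 hr]
  rw [(hasSum_pow_mul_smul_one_add_smul_mul_pow ha hr hjl hjr σ β).tsum_eq, mul_add,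
    mul_smul_comm, hfactor, mul_assoc, mul_neg_geom_series _ (norm_sq_lt_one ha), mul_one,
    mul_smul_comm, ← hfactor, sub_mul, pow_mul_eq_smul_of_mul_eq_smul hjl 3, hjl, ← sub_smul,
    smul_smul]
  congr 2
  field_simp

end NormedAlgebra

theorem linfty_opNorm_le_one_of_mem_rowStochastic {n : Type*} [Fintype n] [DecidableEq n]
    {M : Matrix n n ℝ} (hM : M ∈ rowStochastic ℝ n) : ‖M‖ ≤ 1 := by
  rw [linfty_opNorm_def, NNReal.coe_le_one]
  refine Finset.sup_le fun i _ => ?_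
  rw [← NNReal.coe_le_one]
  push_cast
  simp_rw [Real.norm_of_nonneg (nonneg_of_mem_rowStochastic hM)]
  exact (sum_row_of_mem_rowStochastic hM i).le

theorem mul_onesMat_of_mem_rowStochastic {N : ℕ} {M : Matrix (Fin N) (Fin N) ℝ}
    (hM : M ∈ rowStochastic ℝ (Fin N)) : M * onesMat N = onesMat N := by
  ext i j
  simp [onesMat, mul_apply, sum_row_of_mem_rowStochastic hM i]

theorem onesMat_mul_of_mem_colStochastic {N : ℕ} {M : Matrix (Fin N) (Fin N) ℝ}
    (hM : M ∈ colStochastic ℝ (Fin N)) : onesMat N * M = onesMat N := by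
  ext i j
  simp [onesMat, mul_apply, sum_col_of_mem_colStochastic hM j]

theorem flat_noise_flat_error {N : ℕ}
    (Abar : Matrix (Fin N) (Fin N) ℝ)
    (hnonneg : ∀ i j, 0 ≤ Abar i j)
    (hsymm : Abar.IsSymm)
    (hstoch : ∀ i, ∑ j, Abar i j = 1)
    (ρ : ℝ) (hρ0 : 0 < ρ) (hρ1 : ρ < 1)
    (A : Matrix (Fin N) (Fin N) ℝ) (hA : A = ρ • Abar)
    (σ2gap β : ℝ) (hσ2 : 0 < σ2gap)
    (Sx : Matrix (Fin N) (Fin N) ℝ)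
    (hSx : Sx = σ2gap • (1 : Matrix (Fin N) (Fin N) ℝ) + β • onesMat N)
    (R : ℕ → Matrix (Fin N) (Fin N) ℝ)
    (hR : ∀ k, R k = A ^ k * ∑' i : ℕ, A ^ i * Sx * A ^ i) :
    (1 / σ2gap) • (R 1 - R 3) = A + (β * ρ / σ2gap) • onesMat N ∧
    ∃ c : ℝ, (1 / σ2gap) • (R 1 - R 3) - A = c • onesMat N := by
  have hrow : Abar ∈ rowStochastic ℝ (Fin N) := mem_rowStochastic_iff_sum.2 ⟨hnonneg, hstoch⟩
  have hcol : Abar ∈ colStochastic ℝ (Fin N) := by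
    rwa [← transpose_mem_rowStochastic_iff_mem_colStochastic, hsymm.eq]
  have hAJ : A * onesMat N = ρ • onesMat N := by
    rw [hA, smul_mul_assoc, mul_onesMat_of_mem_rowStochastic hrow]
  have hJA : onesMat N * A = ρ • onesMat N := by
    rw [hA, mul_smul_comm, onesMat_mul_of_mem_colStochastic hcol]
  have hρ : |ρ| < 1 := abs_lt.2 ⟨by linarith, hρ1⟩
  have hnormA : ‖A‖ < 1 :=
    calc ‖A‖ ≤ ‖ρ‖ * ‖Abar‖ := hA ▸ norm_smul_le ρ Abar
      _ ≤ ‖ρ‖ := mul_le_of_le_one_right (norm_nonneg ρ)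
        (linfty_opNorm_le_one_of_mem_rowStochastic hrow)
      _ < 1 := by rwa [Real.norm_eq_abs]
  have hdiff : R 1 - R 3 = σ2gap • A + (β * ρ) • onesMat N := by
    rw [hR, hR, pow_one, ← sub_mul, hSx]
    exact sub_pow_three_mul_tsum_pow_mul_smul_one_add_smul_mul_pow hnormA hρ hAJ hJA σ2gap β
  have hflat : (1 / σ2gap) • (R 1 - R 3) = A + (β * ρ / σ2gap) • onesMat N := by
    rw [hdiff, smul_add, smul_smul, smul_smul, one_div_mul_cancel hσ2.ne', one_smul, one_div,
      inv_mul_eq_div]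
  exact ⟨hflat, _, by rw [hflat, add_sub_cancel_left]⟩
end
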